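/- Let m be a positive integer, B > 0, and let θ̂ ∈ ℝ^{m+1} be a vector with ‖θ̂‖_∞ ≤ B. Suppose there exists an index i ∈ {0,...,m-1} with θ̂(i) > 0 and θ̂(i+1) ≤ 0. Define the probability weights w(i) = θ̂(i+1)/(θ̂(i+1) − θ̂(i)) and w(i+1) = θ̂(i)/(θ̂(i) − θ̂(i+1)) (all other coordinates zero). Then w(i), w(i+1) ≥ 0, w(i) + w(i+1) = 1, and for every y ∈ [0,1]: θ̂(i)·w(i)·(y − i/m) + θ̂(i+1)·w(i+1)·(y − (i+1)/m) ≤ B/m. -/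

import Mathlib

/-! The two weights put the mass `b / (b - a)` on the grid point `i / m`, where `θ̂` is
positive, and `a / (a - b)` on `(i + 1) / m`, where it is non-positive. They are chosen so that
`a * w(i) + b * w(i + 1) = 0`: the terms in `y` cancel, and what is left is `a * w(i)` times the
grid spacing `1 / m`. Since `w(i) ≤ 1` and `a ≤ B`, this is at most `B / m`. -/

section TwoPointWeights

variable {a b : ℝ}

lemma div_sub_add_div_sub_eq_one (h : a ≠ b) : b / (b - a) + a / (a - b) = 1 := by
  rw [← neg_sub a b, div_neg, neg_add_eq_sub, ← sub_div, div_self (sub_ne_zero.2 h)]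

lemma mul_div_sub_add_mul_div_sub_eq_zero (a b : ℝ) : a * (b / (b - a)) + b * (a / (a - b)) = 0 := by
  rw [← neg_sub a b, div_neg]
  ring

lemma mul_div_sub_mul_sub_add_mul_div_sub_mul_sub (a b y p q : ℝ) :
    a * (b / (b - a)) * (y - p) + b * (a / (a - b)) * (y - q) = a * (b / (b - a)) * (q - p) := by
  have hcancel := mul_div_sub_add_mul_div_sub_eq_zero a b
  linear_combination (y - q) * hcancel

lemma div_sub_nonneg_of_nonpos_of_pos (hb : b ≤ 0) (ha : 0 < a) : 0 ≤ b / (b - a) :=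
  div_nonneg_of_nonpos hb (by linarith)

lemma mul_div_sub_le_of_nonpos_of_pos (hb : b ≤ 0) (ha : 0 < a) : a * (b / (b - a)) ≤ a :=
  mul_le_of_le_one_right ha.le ((div_le_one_of_neg (by linarith)).2 (by linarith))

end TwoPointWeights

theorem halfspace_oracle_middle_case
    (m : ℕ) (B : ℝ)
    (θ : Fin (m + 1) → ℝ) (hθ : ∀ i, |θ i| ≤ B)
    (i : ℕ) (hi : i < m)
    (hpos : θ ⟨i, by omega⟩ > 0) (hneg : θ ⟨i + 1, by omega⟩ ≤ 0) :
    let a := θ ⟨i, by omega⟩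
    let b := θ ⟨i + 1, by omega⟩
    let wi := b / (b - a)
    let wi1 := a / (a - b)
    0 ≤ wi ∧ 0 ≤ wi1 ∧ wi + wi1 = 1 ∧
      ∀ y : ℝ, y ∈ Set.Icc (0 : ℝ) 1 →
        a * wi * (y - (i : ℝ) / m) + b * wi1 * (y - ((i : ℝ) + 1) / m) ≤ B / m := by
  intro a b wi wi1
  have hba : b < a := hneg.trans_lt hpos
  refine ⟨div_sub_nonneg_of_nonpos_of_pos hneg hpos, div_nonneg hpos.le (sub_nonneg.2 hba.le),
    div_sub_add_div_sub_eq_one hba.ne', fun y _ => ?_⟩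
  calc a * wi * (y - (i : ℝ) / m) + b * wi1 * (y - ((i : ℝ) + 1) / m)
      = a * wi / m := by
        rw [mul_div_sub_mul_sub_add_mul_div_sub_mul_sub]
        ring
    _ ≤ B / m := div_le_div_of_nonneg_right
        ((mul_div_sub_le_of_nonpos_of_pos hneg hpos).trans (le_of_abs_le (hθ _)))
        (Nat.cast_nonneg m)
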